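/- arXiv:1111.2871 — 2 statements merged into one kernel-verified Lean document; each statement's English description precedes it below -/
import Mathlib

section
/- The Moyal star product satisfies the Leibniz rule: ∂_i(f ⋆ g) = (∂_i f) ⋆ g + f ⋆ (∂_i g) for all coordinate directions i and Schwartz functions f, g. -/
/-!
The Moyal product is `(πℏ)⁻ⁿ` times an integral over `ℝⁿ × ℝⁿ` of `f (u + v) * g (u + w)` against
a unimodular phase in `(v, w)` that does not depend on `u`, so `∂ᵢ` only falls on the two
translates and the ordinary Leibniz rule applies under the integral sign. Differentiating under the
integral is licensed by dominated convergence: by Peetre's inequality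
`1 + ‖v‖ ≤ (1 + ‖x‖) * (1 + ‖x + v‖)`, a Schwartz function and its derivative satisfy
`‖h (x + v)‖ ≤ C (1 + ‖v‖)⁻ᵏ` uniformly for `x` in a ball, for every `k`.
-/

open MeasureTheory SchwartzMap Matrix

/-- The Moyal star product on functions on `ℝⁿ`, defined by
`(f ⋆ g)(u) = (πℏ)⁻ⁿ ∫∫ f(u+v) g(u+w) e^{(2i/ℏ) v·Θ⁻¹·w} dv dw`. -/
noncomputable def moyal (n : ℕ) (hbar : ℝ) (Θinv : Matrix (Fin n) (Fin n) ℝ)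
    (f g : (Fin n → ℝ) → ℂ) : (Fin n → ℝ) → ℂ := fun u =>
  (((Real.pi * hbar) ^ n : ℝ) : ℂ)⁻¹ *
    ∫ v : Fin n → ℝ, ∫ w : Fin n → ℝ,
      f (u + v) * g (u + w) *
        Complex.exp ((2 * Complex.I / (hbar : ℂ)) *
          ((∑ i, ∑ j, v i * Θinv i j * w j : ℝ) : ℂ))

open Metric Real
open scoped LineDeriv

theorem one_add_norm_le_mul_one_add_norm_add {E : Type*} [SeminormedAddCommGroup E] (x v : E) :
    1 + ‖v‖ ≤ (1 + ‖x‖) * (1 + ‖x + v‖) := by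
  have : ‖v‖ ≤ ‖x + v‖ + ‖x‖ := by simpa using norm_sub_le (x + v) x
  nlinarith [norm_nonneg x, norm_nonneg (x + v)]

namespace SchwartzMap

variable {E F₁ F₂ : Type*} [NormedAddCommGroup E] [NormedSpace ℝ E]
  [NormedAddCommGroup F₁] [NormedSpace ℝ F₁] [NormedAddCommGroup F₂] [NormedSpace ℝ F₂]

theorem exists_norm_add_le_rpow_neg (h : 𝓢(E, F₁)) (u : E) (k : ℕ) :
    ∃ C, 0 ≤ C ∧ ∀ x ∈ ball u 1, ∀ v, ‖h (x + v)‖ ≤ C * (1 + ‖v‖) ^ (-(k : ℝ)) := by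
  set M := 2 ^ k * (Finset.Iic (k, 0)).sup (fun m => SchwartzMap.seminorm ℝ m.1 m.2) h
  have hM : ∀ z, (1 + ‖z‖) ^ k * ‖h z‖ ≤ M := fun z => by
    simpa using h.one_add_le_sup_seminorm_apply (𝕜 := ℝ) (m := (k, 0)) le_rfl le_rfl z
  have hM0 : 0 ≤ M := le_trans (by positivity) (hM 0)
  refine ⟨M * (2 + ‖u‖) ^ k, by positivity, fun x hx v => ?_⟩
  have hxu : 1 + ‖x‖ ≤ 2 + ‖u‖ := by
    have := norm_le_norm_add_norm_sub' x u
    have := mem_ball_iff_norm.mp hx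
    linarith
  rw [rpow_neg (by positivity), rpow_natCast, ← div_eq_mul_inv, le_div_iff₀ (by positivity)]
  calc ‖h (x + v)‖ * (1 + ‖v‖) ^ k
      ≤ ‖h (x + v)‖ * ((2 + ‖u‖) * (1 + ‖x + v‖)) ^ k := by
        gcongr
        exact (one_add_norm_le_mul_one_add_norm_add x v).trans (by gcongr)
    _ = (2 + ‖u‖) ^ k * ((1 + ‖x + v‖) ^ k * ‖h (x + v)‖) := by rw [mul_pow]; ring
    _ ≤ (2 + ‖u‖) ^ k * M := by gcongr; exact hM _
    _ = M * (2 + ‖u‖) ^ k := mul_comm _ _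

theorem exists_norm_add_mul_norm_add_le (h₁ : 𝓢(E, F₁)) (h₂ : 𝓢(E, F₂)) (u : E) (k : ℕ) :
    ∃ C, 0 ≤ C ∧ ∀ x ∈ ball u 1, ∀ p : E × E, ‖h₁ (x + p.1)‖ * ‖h₂ (x + p.2)‖ ≤
      C * ((1 + ‖p.1‖) ^ (-(k : ℝ)) * (1 + ‖p.2‖) ^ (-(k : ℝ))) := by
  obtain ⟨C₁, hC₁, h₁_le⟩ := h₁.exists_norm_add_le_rpow_neg u k
  obtain ⟨C₂, hC₂, h₂_le⟩ := h₂.exists_norm_add_le_rpow_neg u k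
  refine ⟨C₁ * C₂, by positivity, fun x hx p => ?_⟩
  calc ‖h₁ (x + p.1)‖ * ‖h₂ (x + p.2)‖
      ≤ (C₁ * (1 + ‖p.1‖) ^ (-(k : ℝ))) * (C₂ * (1 + ‖p.2‖) ^ (-(k : ℝ))) :=
        mul_le_mul (h₁_le x hx p.1) (h₂_le x hx p.2) (norm_nonneg _) (by positivity)
    _ = _ := by ring

end SchwartzMap

theorem integrable_one_add_norm_rpow_neg_integrablePower_prod {E : Type*} [NormedAddCommGroup E]
    [MeasurableSpace E] (μ : Measure E) [μ.HasTemperateGrowth] :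
    Integrable (fun p : E × E => (1 + ‖p.1‖) ^ (-(μ.integrablePower : ℝ)) *
      (1 + ‖p.2‖) ^ (-(μ.integrablePower : ℝ))) (μ.prod μ) :=
  (μ.integrable_pow_neg_integrablePower).mul_prod (μ.integrable_pow_neg_integrablePower)

section TwistedProduct

variable {E : Type*} [NormedAddCommGroup E] [NormedSpace ℝ E] [MeasurableSpace E]
  {μ : Measure E} [μ.HasTemperateGrowth] {e : E × E → ℂ} {C : ℝ}

noncomputable def twistedProduct (μ : Measure E) (e : E × E → ℂ) (f g : E → ℂ) (x : E) : ℂ :=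
  ∫ p, f (x + p.1) * g (x + p.2) * e p ∂μ.prod μ

theorem exists_integrable_bound_twistedProduct_fderiv_integrand (he_le : ∀ p, ‖e p‖ ≤ C)
    (f g : 𝓢(E, ℂ)) (u : E) :
    ∃ bound : E × E → ℝ, Integrable bound (μ.prod μ) ∧ ∀ x ∈ ball u 1, ∀ p : E × E,
      ‖e p • (f (x + p.1) • fderiv ℝ g (x + p.2) + g (x + p.2) • fderiv ℝ f (x + p.1))‖ ≤
        bound p := by
  obtain ⟨K₁, -, hK₁⟩ := f.exists_norm_add_mul_norm_add_le (fderivCLM ℝ E ℂ g) u μ.integrablePower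
  obtain ⟨K₂, -, hK₂⟩ := g.exists_norm_add_mul_norm_add_le (fderivCLM ℝ E ℂ f) u μ.integrablePower
  refine ⟨fun p => C * (K₁ + K₂) * ((1 + ‖p.1‖) ^ (-(μ.integrablePower : ℝ)) *
      (1 + ‖p.2‖) ^ (-(μ.integrablePower : ℝ))),
    (integrable_one_add_norm_rpow_neg_integrablePower_prod μ).const_mul _, fun x hx p => ?_⟩
  have hC : 0 ≤ C := (norm_nonneg _).trans (he_le p)
  have h₁ := hK₁ x hx p
  have h₂ := hK₂ x hx p.swap
  simp only [fderivCLM_apply, Prod.fst_swap, Prod.snd_swap] at h₁ h₂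
  calc _ ≤ ‖e p‖ * (‖f (x + p.1)‖ * ‖fderiv ℝ g (x + p.2)‖ +
          ‖g (x + p.2)‖ * ‖fderiv ℝ f (x + p.1)‖) := by
        grw [norm_smul, norm_add_le, norm_smul, norm_smul]
    _ ≤ C * (K₁ + K₂) * ((1 + ‖p.1‖) ^ (-(μ.integrablePower : ℝ)) *
      (1 + ‖p.2‖) ^ (-(μ.integrablePower : ℝ))) := by
        grw [he_le p, h₁, h₂]
        exact le_of_eq (by ring)

variable [BorelSpace E] [SecondCountableTopology E]

theorem integrable_twistedProduct_integrand (he : AEStronglyMeasurable e (μ.prod μ))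
    (he_le : ∀ p, ‖e p‖ ≤ C) (f g : 𝓢(E, ℂ)) (x : E) :
    Integrable (fun p : E × E => f (x + p.1) * g (x + p.2) * e p) (μ.prod μ) := by
  obtain ⟨K, -, hK⟩ := f.exists_norm_add_mul_norm_add_le g x μ.integrablePower
  have hfg : Integrable (fun p : E × E => f (x + p.1) * g (x + p.2)) (μ.prod μ) :=
    ((integrable_one_add_norm_rpow_neg_integrablePower_prod μ).const_mul K).mono'
      (by fun_prop : Continuous fun p : E × E => f (x + p.1) * g (x + p.2)).aestronglyMeasurable
      (ae_of_all _ fun p => (norm_mul_le _ _).trans (hK x (mem_ball_self one_pos) p))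
  exact hfg.mul_bdd he (ae_of_all _ he_le)

theorem integrable_twistedProduct_fderiv_integrand (he : AEStronglyMeasurable e (μ.prod μ))
    (he_le : ∀ p, ‖e p‖ ≤ C) (f g : 𝓢(E, ℂ)) (u : E) :
    Integrable (fun p : E × E =>
      e p • (f (u + p.1) • fderiv ℝ g (u + p.2) + g (u + p.2) • fderiv ℝ f (u + p.1)))
      (μ.prod μ) := by
  obtain ⟨bound, hbound, hle⟩ :=
    exists_integrable_bound_twistedProduct_fderiv_integrand (μ := μ) he_le f g u
  have hDf : Continuous (fderiv ℝ f) := (fderivCLM ℝ E ℂ f).continuous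
  have hDg : Continuous (fderiv ℝ g) := (fderivCLM ℝ E ℂ g).continuous
  exact hbound.mono' (he.smul (by fun_prop : Continuous fun p : E × E =>
      f (u + p.1) • fderiv ℝ g (u + p.2) + g (u + p.2) • fderiv ℝ f (u + p.1)).aestronglyMeasurable)
    (ae_of_all _ (hle u (mem_ball_self one_pos)))

theorem hasFDerivAt_twistedProduct (he : AEStronglyMeasurable e (μ.prod μ))
    (he_le : ∀ p, ‖e p‖ ≤ C) (f g : 𝓢(E, ℂ)) (u : E) :
    HasFDerivAt (twistedProduct μ e f g)
      (∫ p, e p • (f (u + p.1) • fderiv ℝ g (u + p.2) + g (u + p.2) • fderiv ℝ f (u + p.1))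
        ∂μ.prod μ) u := by
  obtain ⟨bound, hbound, hle⟩ :=
    exists_integrable_bound_twistedProduct_fderiv_integrand (μ := μ) he_le f g u
  refine hasFDerivAt_integral_of_dominated_of_fderiv_le (ball_mem_nhds u one_pos)
    (.of_forall fun x => (integrable_twistedProduct_integrand he he_le f g x).aestronglyMeasurable)
    (integrable_twistedProduct_integrand he he_le f g u) ?_ (ae_of_all _ fun p x hx => hle x hx p)
    hbound (ae_of_all _ fun p x _ => ?_)
  · exact (integrable_twistedProduct_fderiv_integrand he he_le f g u).aestronglyMeasurable
  · have hf : HasFDerivAt (fun y => f (y + p.1)) (fderiv ℝ f (x + p.1)) x := by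
      simpa [Function.comp_def] using
        (f.hasFDerivAt (x + p.1)).comp x ((hasFDerivAt_id x).add_const p.1)
    have hg : HasFDerivAt (fun y => g (y + p.2)) (fderiv ℝ g (x + p.2)) x := by
      simpa [Function.comp_def] using
        (g.hasFDerivAt (x + p.2)).comp x ((hasFDerivAt_id x).add_const p.2)
    exact (hf.mul hg).mul_const (e p)

theorem fderiv_twistedProduct_apply (he : AEStronglyMeasurable e (μ.prod μ))
    (he_le : ∀ p, ‖e p‖ ≤ C) (f g : 𝓢(E, ℂ)) (u y : E) :
    fderiv ℝ (twistedProduct μ e f g) u y =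
      twistedProduct μ e ⇑(∂_{y} f : 𝓢(E, ℂ)) g u +
        twistedProduct μ e f ⇑(∂_{y} g : 𝓢(E, ℂ)) u := by
  rw [(hasFDerivAt_twistedProduct he he_le f g u).fderiv,
    ContinuousLinearMap.integral_apply (integrable_twistedProduct_fderiv_integrand he he_le f g u),
    twistedProduct, twistedProduct, ← integral_add
      (integrable_twistedProduct_integrand he he_le _ g u)
      (integrable_twistedProduct_integrand he he_le f _ u)]
  refine integral_congr_ae (ae_of_all _ fun p => ?_)
  simp only [_root_.smul_apply, _root_.add_apply, smul_eq_mul, lineDerivOp_apply_eq_fderiv]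
  ring

end TwistedProduct

noncomputable def moyalPhase (n : ℕ) (hbar : ℝ) (Θinv : Matrix (Fin n) (Fin n) ℝ) :
    (Fin n → ℝ) × (Fin n → ℝ) → ℂ := fun p =>
  Complex.exp ((2 * Complex.I / (hbar : ℂ)) * ((∑ i, ∑ j, p.1 i * Θinv i j * p.2 j : ℝ) : ℂ))

theorem norm_moyalPhase (n : ℕ) (hbar : ℝ) (Θinv : Matrix (Fin n) (Fin n) ℝ) (p) :
    ‖moyalPhase n hbar Θinv p‖ = 1 := by
  simp [moyalPhase, Complex.norm_exp, Complex.div_re]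

theorem continuous_moyalPhase (n : ℕ) (hbar : ℝ) (Θinv : Matrix (Fin n) (Fin n) ℝ) :
    Continuous (moyalPhase n hbar Θinv) := by
  unfold moyalPhase
  fun_prop

theorem moyal_eq_twistedProduct {n : ℕ} {hbar : ℝ} {Θinv : Matrix (Fin n) (Fin n) ℝ}
    (f g : 𝓢(Fin n → ℝ, ℂ)) :
    moyal n hbar Θinv f g = fun u => (((Real.pi * hbar) ^ n : ℝ) : ℂ)⁻¹ *
      twistedProduct volume (moyalPhase n hbar Θinv) f g u := by
  funext u
  have hint := integrable_twistedProduct_integrand (μ := volume)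
    (continuous_moyalPhase n hbar Θinv).aestronglyMeasurable
    (fun p => (norm_moyalPhase n hbar Θinv p).le) f g u
  rw [moyal, twistedProduct]
  congr 1
  exact integral_integral hint

theorem moyal_leibniz_general (n : ℕ) (hbar : ℝ)
    (Θinv : Matrix (Fin n) (Fin n) ℝ)
    (f g : 𝓢((Fin n → ℝ), ℂ)) (i : Fin n) (u : Fin n → ℝ) :
    fderiv ℝ (moyal n hbar Θinv f g) u (Pi.single i 1) =
      moyal n hbar Θinv (fun x => fderiv ℝ f x (Pi.single i 1)) g u +
        moyal n hbar Θinv f (fun x => fderiv ℝ g x (Pi.single i 1)) u := by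
  have he := (continuous_moyalPhase n hbar Θinv).aestronglyMeasurable
    (μ := (volume : Measure (Fin n → ℝ)).prod volume)
  have he_le p : ‖moyalPhase n hbar Θinv p‖ ≤ 1 := (norm_moyalPhase n hbar Θinv p).le
  rw [moyal_eq_twistedProduct f g,
    fderiv_const_mul (hasFDerivAt_twistedProduct he he_le f g u).differentiableAt,
    _root_.smul_apply, fderiv_twistedProduct_apply he he_le, smul_eq_mul, mul_add]
  -- `⇑(∂_{m} f)` is `fun x => fderiv ℝ f x m` definitionally
  exact congr_arg₂ (· + ·) (congrFun (moyal_eq_twistedProduct _ g) u).symm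
    (congrFun (moyal_eq_twistedProduct f _) u).symm

/-- The Moyal star product satisfies the Leibniz rule:
`∂ᵢ(f ⋆ g) = (∂ᵢ f) ⋆ g + f ⋆ (∂ᵢ g)`. -/
theorem moyal_leibniz (n : ℕ) (hbar : ℝ) (hhbar : 0 < hbar)
    (Θinv : Matrix (Fin n) (Fin n) ℝ) (hskew : Θinv.transpose = -Θinv)
    (hinv : IsUnit Θinv.det)
    (f g : 𝓢((Fin n → ℝ), ℂ)) (i : Fin n) (u : Fin n → ℝ) :
    fderiv ℝ (moyal n hbar Θinv f g) u (Pi.single i 1) =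
      moyal n hbar Θinv (fun x => fderiv ℝ f x (Pi.single i 1)) g u +
        moyal n hbar Θinv f (fun x => fderiv ℝ g x (Pi.single i 1)) u :=
  moyal_leibniz_general n hbar Θinv f g i u
end

section
/- For bounded operators A on a Hilbert space and D self-adjoint with e^{-tD²} trace class, the commutator identity [e^{-tD²}, A] = −t ∫₀¹ e^{-tsD²} [D², A] e^{-t(1-s)D²} ds holds whenever [D²,A] extends to a bounded operator. -/
open MeasureTheory NormedSpace

section Duhamel

variable {𝔸 : Type*} [NormedRing 𝔸] [NormedAlgebra ℝ 𝔸]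

theorem exp_smul_mul_commutator_mul_exp_one_sub_smul_smul (X A : 𝔸) (c s : ℝ) :
    exp (s • (c • X)) * (c • X * A - A * (c • X)) * exp ((1 - s) • (c • X)) =
      c • (exp ((c * s) • X) * (X * A - A * X) * exp ((c * (1 - s)) • X)) := by
  rw [smul_smul, smul_smul, mul_comm s, mul_comm (1 - s), smul_mul_assoc, mul_smul_comm,
    ← smul_sub, mul_smul_comm, smul_mul_assoc]

variable [CompleteSpace 𝔸]

theorem continuous_exp_smul (C : 𝔸) : Continuous fun s : ℝ => exp (s • C) :=
  continuous_iff_continuousAt.mpr fun s => (hasDerivAt_exp_smul_const C s).continuousAt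

theorem hasDerivAt_exp_smul_mul_mul_exp_one_sub_smul (C A : 𝔸) (s : ℝ) :
    HasDerivAt (fun u : ℝ => exp (u • C) * (A * exp ((1 - u) • C)))
      (exp (s • C) * (C * A - A * C) * exp ((1 - s) • C)) s := by
  have hleft : HasDerivAt (fun u : ℝ => exp (u • C)) (exp (s • C) * C) s :=
    hasDerivAt_exp_smul_const C s
  have hright : HasDerivAt (fun u : ℝ => A * exp ((1 - u) • C))
      (A * ((-1 : ℝ) • (exp ((1 - s) • C) * C))) s :=
    ((hasDerivAt_exp_smul_const C (1 - s)).scomp s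
      ((hasDerivAt_id s).const_sub 1)).const_mul A
  have hcomm : C * exp ((1 - s) • C) = exp ((1 - s) • C) * C :=
    ((Commute.refl C).smul_right (1 - s)).exp_right.eq
  refine (hleft.mul hright).congr_deriv ?_
  rw [neg_one_smul, mul_neg, ← hcomm]
  noncomm_ring

/-- Duhamel's formula: `s ↦ exp (s C) A exp ((1 - s) C)` runs from `A exp C` to `exp C A`. -/
theorem exp_mul_sub_mul_exp_eq_integral (C A : 𝔸) :
    exp C * A - A * exp C =
      ∫ s in (0:ℝ)..1, exp (s • C) * (C * A - A * C) * exp ((1 - s) • C) := by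
  have hcont : Continuous fun s : ℝ => exp (s • C) * (C * A - A * C) * exp ((1 - s) • C) :=
    ((continuous_exp_smul C).mul continuous_const).mul
      ((continuous_exp_smul C).comp (continuous_const.sub continuous_id))
  rw [intervalIntegral.integral_eq_sub_of_hasDerivAt
    (fun s _ => hasDerivAt_exp_smul_mul_mul_exp_one_sub_smul C A s) (hcont.intervalIntegrable 0 1)]
  simp

end Duhamel

theorem heat_commutator_identity_general {H : Type*} [NormedAddCommGroup H] [InnerProductSpace ℂ H]
    [CompleteSpace H] (D A : H →L[ℂ] H) (t : ℝ) :
    NormedSpace.exp ((-t) • D ^ 2) * A - A * NormedSpace.exp ((-t) • D ^ 2) =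
      (-t) • ∫ s in (0:ℝ)..1,
        NormedSpace.exp ((-(t * s)) • D ^ 2) * (D ^ 2 * A - A * D ^ 2) *
          NormedSpace.exp ((-(t * (1 - s))) • D ^ 2) := by
  simp only [exp_mul_sub_mul_exp_eq_integral, exp_smul_mul_commutator_mul_exp_one_sub_smul_smul,
    intervalIntegral.integral_smul, neg_mul]

/-- For a bounded operator `A` on a Hilbert space and `D` self-adjoint, the commutator
identity `[e^{-tD²}, A] = −t ∫₀¹ e^{-tsD²} [D², A] e^{-t(1-s)D²} ds` holds. -/
theorem heat_commutator_identity {H : Type*} [NormedAddCommGroup H] [InnerProductSpace ℂ H]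
    [CompleteSpace H] (D A : H →L[ℂ] H) (hD : IsSelfAdjoint D) (t : ℝ) (ht : 0 ≤ t) :
    NormedSpace.exp ((-t) • D ^ 2) * A - A * NormedSpace.exp ((-t) • D ^ 2) =
      (-t) • ∫ s in (0:ℝ)..1,
        NormedSpace.exp ((-(t * s)) • D ^ 2) * (D ^ 2 * A - A * D ^ 2) *
          NormedSpace.exp ((-(t * (1 - s))) • D ^ 2) :=
  heat_commutator_identity_general D A t
end
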